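/- For every unit vector a ∈ ℝ³, the operator norm (with respect to the Euclidean norm on ℝ⁶) of the 6×6 block matrix A = [[−I, [a]ₓ],[[a]ₓ, 0]] is at most √3. -/

import Mathlib

open Matrix

noncomputable section

/-- Euclidean norm on ℝ³. -/
def enorm3 (x : Fin 3 → ℝ) : ℝ := Real.sqrt (∑ i, (x i) ^ 2)

/-- Skew-symmetric cross-product matrix `[x]ₓ`. -/
def skew3 (x : Fin 3 → ℝ) : Matrix (Fin 3) (Fin 3) ℝ :=
  !![0, -x 2, x 1; x 2, 0, -x 0; -x 1, x 0, 0]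

/-- Euclidean norm on ℝ⁶ = ℝ³ × ℝ³. -/
def enorm6 (Z : Fin 3 ⊕ Fin 3 → ℝ) : ℝ := Real.sqrt (∑ i, (Z i) ^ 2)

/-- The 6×6 block matrix `A = [[−I, [a]ₓ], [[a]ₓ, 0]]`. -/
def Amat (a : Fin 3 → ℝ) : Matrix (Fin 3 ⊕ Fin 3) (Fin 3 ⊕ Fin 3) ℝ :=
  Matrix.fromBlocks (-1) (skew3 a) (skew3 a) 0

/-!
Write `X = (x, y)`, so that `A X = (-x + a × y, a × x)`. For a unit vector `a`, Lagrange's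
identity `|a × v|² = |v|² - (a ⬝ v)²` shows that `v ↦ a × v` is a contraction, hence
`|A X|² ≤ 2|x|² + 2|a × y|² + |a × x|² ≤ 3|x|² + 2|y|² ≤ 3|X|²`.
-/

lemma sum_sq_eq_dotProduct_self {R n : Type*} [CommSemiring R] [Fintype n] (v : n → R) :
    ∑ i, v i ^ 2 = v ⬝ᵥ v := by
  simp only [dotProduct, sq]

section DotProductSelf

variable {R : Type*} [CommRing R] [LinearOrder R] [IsStrictOrderedRing R]

lemma add_dotProduct_self_add_le {n : Type*} [Fintype n] (u v : n → R) :
    (u + v) ⬝ᵥ (u + v) ≤ 2 * (u ⬝ᵥ u) + 2 * (v ⬝ᵥ v) := by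
  have h : 0 ≤ (u - v) ⬝ᵥ (u - v) := Finset.sum_nonneg fun i _ => mul_self_nonneg _
  simp only [add_dotProduct, dotProduct_add, sub_dotProduct, dotProduct_sub,
    dotProduct_comm v u] at h ⊢
  linarith

lemma cross_dotProduct_self_le (u v : Fin 3 → R) :
    u ⨯₃ v ⬝ᵥ u ⨯₃ v ≤ (u ⬝ᵥ u) * (v ⬝ᵥ v) := by
  rw [cross_dot_cross, dotProduct_comm v u]
  exact sub_le_self _ (mul_self_nonneg _)

lemma fromBlocks_neg_one_mulVec_dotProduct_self_le {n : Type*} [Fintype n] [DecidableEq n]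
    {B : Matrix n n R} (hB : ∀ y, B *ᵥ y ⬝ᵥ B *ᵥ y ≤ y ⬝ᵥ y) (X : n ⊕ n → R) :
    fromBlocks (-1) B B 0 *ᵥ X ⬝ᵥ fromBlocks (-1) B B 0 *ᵥ X ≤ 3 * (X ⬝ᵥ X) := by
  rw [← Sum.elim_comp_inl_inr X]
  set x := X ∘ Sum.inl
  set y := X ∘ Sum.inr
  rw [fromBlocks_mulVec, Sum.elim_comp_inl, Sum.elim_comp_inr, sumElim_dotProduct_sumElim,
    sumElim_dotProduct_sumElim, neg_mulVec, one_mulVec, zero_mulVec, add_zero]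
  have hsum := add_dotProduct_self_add_le (-x) (B *ᵥ y)
  rw [neg_dotProduct, dotProduct_neg, neg_neg] at hsum
  have hy_nonneg : 0 ≤ y ⬝ᵥ y := Finset.sum_nonneg fun i _ => mul_self_nonneg _
  linarith [hB x, hB y]

end DotProductSelf

lemma skew3_mulVec (a y : Fin 3 → ℝ) : skew3 a *ᵥ y = a ⨯₃ y := by
  ext i
  fin_cases i <;> simp [skew3, cross_apply, mulVec, dotProduct, Fin.sum_univ_three] <;> ring

lemma skew3_mulVec_dotProduct_self_le {a : Fin 3 → ℝ} (ha : a ⬝ᵥ a = 1) (y : Fin 3 → ℝ) :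
    skew3 a *ᵥ y ⬝ᵥ skew3 a *ᵥ y ≤ y ⬝ᵥ y := by
  simpa only [skew3_mulVec, ha, one_mul] using cross_dotProduct_self_le a y

/-- for a unit vector `a`, the Euclidean operator norm of
`A = [[−I, [a]ₓ], [[a]ₓ, 0]]` is at most `√3`:  `|A X| ≤ √3 |X|` for all `X ∈ ℝ⁶`. -/
theorem Amat_operator_norm_le_sqrt_three
    (a : Fin 3 → ℝ) (ha : enorm3 a = 1) :
    ∀ X : Fin 3 ⊕ Fin 3 → ℝ, enorm6 ((Amat a).mulVec X) ≤ Real.sqrt 3 * enorm6 X := by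
  intro X
  have ha' : a ⬝ᵥ a = 1 := by
    rwa [enorm3, Real.sqrt_eq_one, sum_sq_eq_dotProduct_self] at ha
  rw [enorm6, enorm6, sum_sq_eq_dotProduct_self, sum_sq_eq_dotProduct_self,
    ← Real.sqrt_mul zero_le_three]
  exact Real.sqrt_le_sqrt
    (fromBlocks_neg_one_mulVec_dotProduct_self_le (skew3_mulVec_dotProduct_self_le ha') X)

end
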